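/- Let μ be a Borel probability measure on ℝ with compact support which is not a point mass, let α ∈ (0,1), c ∈ ℝ, and let w ∈ ℂ ∖ ℝ satisfy w·G_μ(w + c) = 1 − α. Then ∫_ℝ (c − x)/|w + c − x|² dμ(x) = 0 and ∫_ℝ |w|²/|w + c − x|² dμ(x) = 1 − α. -/

import Mathlib

/-! Writing `w / (w + c - t) = (‖w‖² + (c - t) w) / ‖w + c - t‖²` splits the
hypothesis `∫ w / (w + c - t) dμ = 1 - α` into a real integral plus `w` times another real
integral; since `w ∉ ℝ`, comparing imaginary parts kills the second integral, and the first
is then `1 - α`. -/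

open MeasureTheory Complex

/-- The Cauchy (Stieltjes) transform of a measure on `ℝ`. -/
noncomputable def cauchyT (μ : Measure ℝ) (w : ℂ) : ℂ := ∫ t : ℝ, (w - (t : ℂ))⁻¹ ∂μ

lemma integrable_inv_sub_ofReal {μ : Measure ℝ} [IsFiniteMeasure μ] {z : ℂ} (hz : z.im ≠ 0) :
    Integrable (fun t : ℝ => (z - t)⁻¹) μ := by
  have hne : ∀ t : ℝ, z - t ≠ 0 := fun t h => hz (by simpa using congrArg im h)
  refine Integrable.mono' (integrable_const |z.im|⁻¹)
    ((continuous_const.sub continuous_ofReal).inv₀ hne).aestronglyMeasurable ?_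
  filter_upwards with t
  rw [norm_inv]
  exact inv_anti₀ (abs_pos.mpr hz) (by simpa using abs_im_le_norm (z - t))

lemma mul_inv_add_ofReal (w : ℂ) (s : ℝ) :
    w * (w + s)⁻¹ = ((‖w‖ ^ 2 / ‖w + s‖ ^ 2 : ℝ) : ℂ) + w * ((s / ‖w + s‖ ^ 2 : ℝ) : ℂ) := by
  rw [inv_def, map_add, conj_ofReal, ← normSq_eq_norm_sq, ← normSq_eq_norm_sq]
  push_cast
  linear_combination ((normSq (w + s) : ℂ))⁻¹ * mul_conj w

lemma integral_eq_zero_and_integral_eq_of_integral_add_mul {X : Type*} [MeasurableSpace X]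
    {μ : Measure X} {f g : X → ℝ} {w : ℂ} {r : ℝ} (hw : w.im ≠ 0)
    (hint : Integrable (fun x => (g x : ℂ) + w * f x) μ)
    (hr : ∫ x, ((g x : ℂ) + w * f x) ∂μ = r) :
    ∫ x, f x ∂μ = 0 ∧ ∫ x, g x ∂μ = r := by
  have hf : Integrable f μ := by
    convert hint.im.const_mul w.im⁻¹ using 2 with x
    simp [hw]
  have hg : Integrable g μ := by
    convert hint.re.sub (hf.const_mul w.re) using 1
    ext x
    simp
  have hsplit : ((∫ x, g x ∂μ : ℝ) : ℂ) + w * ((∫ x, f x ∂μ : ℝ) : ℂ) = r := by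
    have hgC : Integrable (fun x => (g x : ℂ)) μ := hg.ofReal
    have hfC : Integrable (fun x => w * f x) μ := hf.ofReal.const_mul w
    rw [← hr, integral_add hgC hfC, integral_const_mul,
      integral_complex_ofReal, integral_complex_ofReal]
  have him := congrArg im hsplit
  have hre := congrArg re hsplit
  simp only [add_im, add_re, ofReal_im, ofReal_re, mul_im, mul_re, zero_add,
    mul_zero, sub_zero] at him hre
  have hF : ∫ x, f x ∂μ = 0 := (mul_eq_zero.mp him).resolve_left hw
  exact ⟨hF, by simpa [hF] using hre⟩

theorem stmt4_general (μ : Measure ℝ) [IsProbabilityMeasure μ]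
    (α : ℝ) (c : ℝ)
    (w : ℂ) (hw : w.im ≠ 0)
    (heq : w * cauchyT μ (w + c) = ((1 - α : ℝ) : ℂ)) :
    (∫ t : ℝ, (c - t) / ‖w + (c : ℂ) - (t : ℂ)‖ ^ 2 ∂μ) = 0 ∧
    (∫ t : ℝ, ‖w‖ ^ 2 / ‖w + (c : ℂ) - (t : ℂ)‖ ^ 2 ∂μ) = 1 - α := by
  have hsplit : ∀ t : ℝ, w * (w + c - t)⁻¹ = ((‖w‖ ^ 2 / ‖w + c - t‖ ^ 2 : ℝ) : ℂ)
      + w * (((c - t) / ‖w + c - t‖ ^ 2 : ℝ) : ℂ) := fun t => by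
    rw [show w + c - t = w + ((c - t : ℝ) : ℂ) by push_cast; ring]
    exact mul_inv_add_ofReal w (c - t)
  have hint := (integrable_inv_sub_ofReal (μ := μ) (z := w + c) (by simpa using hw)).const_mul w
  simp_rw [hsplit] at hint
  refine integral_eq_zero_and_integral_eq_of_integral_add_mul hw hint ?_
  simp_rw [← hsplit]
  rwa [integral_const_mul]

theorem stmt4 (μ : Measure ℝ) [IsProbabilityMeasure μ]
    (hcomp : ∃ K : Set ℝ, IsCompact K ∧ μ Kᶜ = 0)
    (hnotpoint : ∀ t : ℝ, μ ≠ Measure.dirac t)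
    (α : ℝ) (hα : α ∈ Set.Ioo (0 : ℝ) 1) (c : ℝ)
    (w : ℂ) (hw : w.im ≠ 0)
    (heq : w * cauchyT μ (w + c) = ((1 - α : ℝ) : ℂ)) :
    (∫ t : ℝ, (c - t) / ‖w + (c : ℂ) - (t : ℂ)‖ ^ 2 ∂μ) = 0 ∧
    (∫ t : ℝ, ‖w‖ ^ 2 / ‖w + (c : ℂ) - (t : ℂ)‖ ^ 2 ∂μ) = 1 - α :=
  stmt4_general μ α c w hw heq
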